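/- arXiv:2509.13522 — 5 statements merged into one kernel-verified Lean document; each statement's English description precedes it below -/
import Mathlib

section
/- Let g be a metric Lie algebra with Levi-Civita product ∇ given by the Koszul formula, and for ξ ∈ g define (L_ξ∇)(v,w) := [ξ, ∇_v w] − ∇_{[ξ,v]} w − ∇_v [ξ,w]. Then for all v, w ∈ g, (L_ξ∇)(v,w) = (1/2)( K_v([ξ,w]) + K_w([ξ,v]) − [ξ, K_v(w)] ), where K_v(w) = ad*_v(w) + ad*_w(v). -/
local notation "⟪" x ", " y "⟫" => @inner ℝ _ _ x y

/-!
The Koszul formula says `∇_x y = ½ ([x, y] - ad*_x y - ad*_y x) = ½ ([x, y] - K_x y)`.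
Substituting this into `(L_ξ∇)(v, w)`, the bracket terms combine to
`[ξ, [v, w]] - [[ξ, v], w] - [v, [ξ, w]]`, which vanishes by the Jacobi identity,
and what remains is the `K`-part, using that `K` is symmetric.
-/

theorem nab_eq_half_smul_bracket_sub_adStar {g : Type*} [NormedAddCommGroup g]
    [InnerProductSpace ℝ g] (b : g →ₗ[ℝ] g →ₗ[ℝ] g) (hskew : ∀ x y, b x y = - b y x)
    (nab : g → g → g)
    (hkoszul : ∀ x y z, 2 * ⟪nab x y, z⟫ = ⟪b x y, z⟫ - ⟪b y z, x⟫ + ⟪b z x, y⟫)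
    (adStar : g → g → g) (hadStar : ∀ x y z, ⟪adStar x y, z⟫ = ⟪y, b x z⟫) (x y : g) :
    nab x y = (1/2 : ℝ) • (b x y - (adStar x y + adStar y x)) := by
  refine ext_inner_right ℝ fun z => ?_
  have h := hkoszul x y z
  rw [hskew z x, inner_neg_left, real_inner_comm x, real_inner_comm y] at h
  rw [real_inner_smul_left, inner_sub_left, inner_add_left, hadStar, hadStar]
  linarith

theorem stmt_4_general
    {g : Type*} [NormedAddCommGroup g] [InnerProductSpace ℝ g]
    (b : g →ₗ[ℝ] g →ₗ[ℝ] g)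
    (hskew : ∀ x y, b x y = - b y x)
    (hjac : ∀ x y z, b x (b y z) = b (b x y) z + b y (b x z))
    (nab : g → g → g)
    (hkoszul : ∀ x y z, 2 * ⟪nab x y, z⟫ = ⟪b x y, z⟫ - ⟪b y z, x⟫ + ⟪b z x, y⟫)
    (adStar : g → g → g)
    (hadStar : ∀ x y z, ⟪adStar x y, z⟫ = ⟪y, b x z⟫)
    (K : g → g → g)
    (hKdef : ∀ v w, K v w = adStar v w + adStar w v)
    (ξ : g) :
    ∀ v w, b ξ (nab v w) - nab (b ξ v) w - nab v (b ξ w)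
      = (1/2 : ℝ) • (K v (b ξ w) + K w (b ξ v) - b ξ (K v w)) := by
  intro v w
  simp only [nab_eq_half_smul_bracket_sub_adStar b hskew nab hkoszul adStar hadStar, hKdef,
    map_smul, map_sub, map_add]
  linear_combination (norm := module) (1/2 : ℝ) • hjac ξ v w

/-- `(L_ξ∇)(v,w) = (1/2)(K_v([ξ,w]) + K_w([ξ,v]) − [ξ, K_v(w)])`. -/
theorem stmt_4
    {g : Type*} [NormedAddCommGroup g] [InnerProductSpace ℝ g] [FiniteDimensional ℝ g]
    (b : g →ₗ[ℝ] g →ₗ[ℝ] g)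
    (hskew : ∀ x y, b x y = - b y x)
    (hjac : ∀ x y z, b x (b y z) = b (b x y) z + b y (b x z))
    (nab : g → g → g)
    (hkoszul : ∀ x y z, 2 * ⟪nab x y, z⟫ = ⟪b x y, z⟫ - ⟪b y z, x⟫ + ⟪b z x, y⟫)
    (adStar : g → g → g)
    (hadStar : ∀ x y z, ⟪adStar x y, z⟫ = ⟪y, b x z⟫)
    (K : g → g → g)
    (hKdef : ∀ v w, K v w = adStar v w + adStar w v)
    (ξ : g) :
    ∀ v w, b ξ (nab v w) - nab (b ξ v) w - nab v (b ξ w)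
      = (1/2 : ℝ) • (K v (b ξ w) + K w (b ξ v) - b ξ (K v w)) :=
  stmt_4_general b hskew hjac nab hkoszul adStar hadStar K hKdef ξ
end

section
/- In the 5-dimensional metric Lie algebra A_{3,1} ⊕ 2A_1 (orthonormal basis v1,…,v5, only nonzero bracket [v1,v2] = α v5 with α > 0), one has the explicit formulas (L_ξ∇)(v1,v1) = −α² ξ2 v2, (L_ξ∇)(v2,v2) = −α² ξ1 v1, (L_ξ∇)(v1,v2) = (1/2)(α² ξ2 v1 + α² ξ1 v2), (L_ξ∇)(v1,v5) = −(1/2)α² ξ1 v5, (L_ξ∇)(v2,v5) = −(1/2)α² ξ2 v5, and (L_ξ∇)(v_i,v_j) = 0 whenever j ∈ {3,4} or i,j ∈ {3,4,5}. -/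
local notation "⟪" x ", " y "⟫" => @inner ℝ _ _ x y

/-- The underlying space `ℝ⁵`. -/
abbrev V := EuclideanSpace ℝ (Fin 5)

/-- The standard orthonormal basis; `e 0,…,e 4` play the roles of `v1,…,v5`. -/
noncomputable def e (i : Fin 5) : V := EuclideanSpace.single i 1

/-- explicit formulas for `(L_ξ∇)` on `A_{3,1} ⊕ 2A_1`. -/
theorem stmt_9
    (α : ℝ) (hα : 0 < α)
    (b : V →ₗ[ℝ] V →ₗ[ℝ] V)
    (hskew : ∀ x y, b x y = - b y x)
    (h12 : b (e 0) (e 1) = α • e 4)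
    (hzero : ∀ i j : Fin 5, i < j → (i, j) ≠ ((0 : Fin 5), (1 : Fin 5)) → b (e i) (e j) = 0)
    (nab : V → V → V)
    (hkoszul : ∀ x y z, 2 * ⟪nab x y, z⟫ = ⟪b x y, z⟫ - ⟪b y z, x⟫ + ⟪b z x, y⟫)
    (ξ : V) :
    (b ξ (nab (e 0) (e 0)) - nab (b ξ (e 0)) (e 0) - nab (e 0) (b ξ (e 0))
        = -((α^2 * ξ 1) • e 1)) ∧
    (b ξ (nab (e 1) (e 1)) - nab (b ξ (e 1)) (e 1) - nab (e 1) (b ξ (e 1))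
        = -((α^2 * ξ 0) • e 0)) ∧
    (b ξ (nab (e 0) (e 1)) - nab (b ξ (e 0)) (e 1) - nab (e 0) (b ξ (e 1))
        = (1/2 : ℝ) • ((α^2 * ξ 1) • e 0 + (α^2 * ξ 0) • e 1)) ∧
    (b ξ (nab (e 0) (e 4)) - nab (b ξ (e 0)) (e 4) - nab (e 0) (b ξ (e 4))
        = -(((1/2) * α^2 * ξ 0) • e 4)) ∧
    (b ξ (nab (e 1) (e 4)) - nab (b ξ (e 1)) (e 4) - nab (e 1) (b ξ (e 4))
        = -(((1/2) * α^2 * ξ 1) • e 4)) ∧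
    (∀ i j : Fin 5, ((j = 2 ∨ j = 3) ∨ (2 ≤ i ∧ 2 ≤ j)) →
      b ξ (nab (e i) (e j)) - nab (b ξ (e i)) (e j) - nab (e i) (b ξ (e j)) = 0) := by
  -- b vanishes on the diagonal
  have hxx : ∀ x : V, b x x = 0 := by
    intro x
    have h2 : b x x + b x x = 0 := by nth_rewrite 1 [hskew x x]; abel
    have h3 := (two_smul ℝ (b x x)) ▸ h2
    simpa [smul_eq_zero] using h3
  -- values of b on the basis
  have key : ∀ i j : Fin 5, b (e i) (e j) = ((e i 0 * e j 1 - e i 1 * e j 0) * α) • e 4 := by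
    intro i j
    fin_cases i <;> fin_cases j <;> simp only [Fin.reduceFinMk] <;>
      first
      | (rw [hxx]; simp (config := { decide := true }) [e, EuclideanSpace.single_apply])
      | (rw [h12]; simp (config := { decide := true }) [e, EuclideanSpace.single_apply])
      | (rw [hskew, h12];
         simp only [e, EuclideanSpace.single_apply, Fin.reduceEq, reduceIte]; module)
      | (rw [hzero _ _ (by decide) (by decide)];
         simp (config := { decide := true }) [e, EuclideanSpace.single_apply])
      | (rw [hskew, hzero _ _ (by decide) (by decide)];
         simp (config := { decide := true }) [e, EuclideanSpace.single_apply])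
  have hrep : ∀ x : V, x = ∑ i, x i • e i := by
    intro x; ext k; fin_cases k <;> simp [e, EuclideanSpace.single_apply, Fin.sum_univ_five]
  -- explicit bilinear formula for b
  have hbb : ∀ x y : V, b x y = ((x 0 * y 1 - x 1 * y 0) * α) • e 4 := by
    intro x y
    conv_lhs => rw [hrep x, hrep y]
    simp only [Fin.sum_univ_five, map_add, map_smul, LinearMap.add_apply,
      LinearMap.smul_apply, key]
    simp (config := { decide := true }) [e, EuclideanSpace.single_apply, smul_smul]
    module
  -- explicit formula for the connection
  have hN : ∀ x y : V, nab x y = ((α/2) * (x 4 * y 1 + x 1 * y 4)) • e 0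
      - ((α/2) * (x 4 * y 0 + x 0 * y 4)) • e 1
      + ((α/2) * (x 0 * y 1 - x 1 * y 0)) • e 4 := by
    intro x y
    apply ext_inner_right ℝ
    intro z
    have h := hkoszul x y z
    rw [hbb x y, hbb y z, hbb z x] at h
    simp only [real_inner_smul_left, inner_sub_left, inner_add_left, e,
      EuclideanSpace.inner_single_left, RCLike.inner_apply, conj_trivial, one_mul] at h ⊢
    linear_combination h / 2
  refine ⟨?_, ?_, ?_, ?_, ?_, ?_⟩
  · simp only [hN, hbb]
    simp only [e, EuclideanSpace.single_apply, Fin.reduceEq, reduceIte,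
      PiLp.add_apply, PiLp.sub_apply, PiLp.smul_apply, smul_eq_mul]
    module
  · simp only [hN, hbb]
    simp only [e, EuclideanSpace.single_apply, Fin.reduceEq, reduceIte,
      PiLp.add_apply, PiLp.sub_apply, PiLp.smul_apply, smul_eq_mul]
    module
  · simp only [hN, hbb]
    simp only [e, EuclideanSpace.single_apply, Fin.reduceEq, reduceIte,
      PiLp.add_apply, PiLp.sub_apply, PiLp.smul_apply, smul_eq_mul]
    module
  · simp only [hN, hbb]
    simp only [e, EuclideanSpace.single_apply, Fin.reduceEq, reduceIte,
      PiLp.add_apply, PiLp.sub_apply, PiLp.smul_apply, smul_eq_mul]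
    module
  · simp only [hN, hbb]
    simp only [e, EuclideanSpace.single_apply, Fin.reduceEq, reduceIte,
      PiLp.add_apply, PiLp.sub_apply, PiLp.smul_apply, smul_eq_mul]
    module
  · have hz1 : ∀ x y : V, y 0 = 0 → y 1 = 0 → y 4 = 0 →
        b ξ (nab x y) - nab (b ξ x) y - nab x (b ξ y) = 0 := by
      intro x y h0 h1 h4
      simp only [hN, hbb, h0, h1, h4]
      simp only [e, EuclideanSpace.single_apply, Fin.reduceEq, reduceIte,
        PiLp.add_apply, PiLp.sub_apply, PiLp.smul_apply, smul_eq_mul]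
      module
    have hz2 : ∀ x y : V, x 0 = 0 → x 1 = 0 → y 0 = 0 → y 1 = 0 →
        b ξ (nab x y) - nab (b ξ x) y - nab x (b ξ y) = 0 := by
      intro x y h0 h1 h2 h3
      simp only [hN, hbb, h0, h1, h2, h3]
      simp only [e, EuclideanSpace.single_apply, Fin.reduceEq, reduceIte,
        PiLp.add_apply, PiLp.sub_apply, PiLp.smul_apply, smul_eq_mul]
      module
    intro i j hij
    rcases hij with (hj | hj) | ⟨hi, hj⟩
    · subst hj
      exact hz1 _ _ (by simp [e, EuclideanSpace.single_apply])
        (by simp [e, EuclideanSpace.single_apply]) (by simp [e, EuclideanSpace.single_apply])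
    · subst hj
      exact hz1 _ _ (by simp [e, EuclideanSpace.single_apply])
        (by simp [e, EuclideanSpace.single_apply]) (by simp [e, EuclideanSpace.single_apply])
    · have hi0 : i ≠ 0 := by rintro rfl; exact absurd hi (by decide)
      have hi1 : i ≠ 1 := by rintro rfl; exact absurd hi (by decide)
      have hj0 : j ≠ 0 := by rintro rfl; exact absurd hj (by decide)
      have hj1 : j ≠ 1 := by rintro rfl; exact absurd hj (by decide)
      exact hz2 _ _ (by simp [e, EuclideanSpace.single_apply, hi0, Ne.symm hi0])
        (by simp [e, EuclideanSpace.single_apply, hi1, Ne.symm hi1])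
        (by simp [e, EuclideanSpace.single_apply, hj0, Ne.symm hj0])
        (by simp [e, EuclideanSpace.single_apply, hj1, Ne.symm hj1])
end

section
/- Let g = A_{5,4} be the 5-dimensional metric Lie algebra with orthonormal basis v1,…,v5 and nonzero brackets [v1,v3] = α v5, [v1,v4] = β v5, [v2,v3] = γ v5, with β, γ > 0 and α ∈ ℝ. A vector ξ = Σ ξ_i v_i is affine (i.e. (L_ξ∇) = 0 for the Levi-Civita product ∇) if and only if ξ1 = ξ2 = ξ3 = ξ4 = 0, i.e. ξ ∈ Z(g) = span{v5}. -/
local notation "⟪" x ", " y "⟫" => @inner ℝ _ _ x y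

/-!
Let `z` be central and `ξ` affine. Then `(L_ξ∇)(ξ, z) = [ξ, ∇_ξ z]`, and the Koszul formula gives
`2 ⟪∇_ξ z, u⟫ = -⟪[ξ, u], z⟫`; pairing with `u = ∇_ξ z` forces `∇_ξ z = 0`, hence `[ξ, ·] ⊥ z`.
In `A_{5,4}` all brackets lie in the line of the central vector `v5`, so `ξ` is central, and since
`β, γ ≠ 0` the centre is `span {v5}`. Conversely a central `ξ` is affine because `∇` vanishes as
soon as one of its arguments is `0`.
-/

namespace MetricLieAlgebra

variable {E : Type*} [NormedAddCommGroup E] [InnerProductSpace ℝ E]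
  {b : E →ₗ[ℝ] E →ₗ[ℝ] E} {nab : E → E → E}

def IsLeviCivita (b : E →ₗ[ℝ] E →ₗ[ℝ] E) (nab : E → E → E) : Prop :=
  ∀ x y z, 2 * ⟪nab x y, z⟫ = ⟪b x y, z⟫ - ⟪b y z, x⟫ + ⟪b z x, y⟫

def IsAffine (b : E →ₗ[ℝ] E →ₗ[ℝ] E) (nab : E → E → E) (ξ : E) : Prop :=
  ∀ v w, b ξ (nab v w) - nab (b ξ v) w - nab v (b ξ w) = 0

def IsCentral (b : E →ₗ[ℝ] E →ₗ[ℝ] E) (ξ : E) : Prop :=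
  ∀ y, b ξ y = 0

theorem bracket_self (hskew : ∀ x y, b x y = - b y x) (x : E) : b x x = 0 := by
  have h := hskew x x
  rw [eq_neg_iff_add_eq_zero, ← two_smul ℝ, smul_eq_zero] at h
  exact h.resolve_left two_ne_zero

theorem IsLeviCivita.nab_zero_left (h : IsLeviCivita b nab) (y : E) : nab 0 y = 0 := by
  refine (inner_self_eq_zero (𝕜 := ℝ)).mp ?_
  have hy := h 0 y (nab 0 y)
  simp only [map_zero, LinearMap.zero_apply, inner_zero_left, inner_zero_right] at hy
  linarith

theorem IsLeviCivita.nab_zero_right (h : IsLeviCivita b nab) (x : E) : nab x 0 = 0 := by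
  refine (inner_self_eq_zero (𝕜 := ℝ)).mp ?_
  have hx := h x 0 (nab x 0)
  simp only [map_zero, LinearMap.zero_apply, inner_zero_left, inner_zero_right] at hx
  linarith

theorem IsCentral.isAffine (h : IsLeviCivita b nab) {ξ : E} (hξ : IsCentral b ξ) :
    IsAffine b nab ξ := by
  intro v w
  rw [hξ, hξ, hξ, h.nab_zero_left, h.nab_zero_right, sub_zero, sub_zero]

theorem IsAffine.inner_bracket_eq_zero (h : IsLeviCivita b nab)
    (hskew : ∀ x y, b x y = - b y x) {z ξ : E} (hz : IsCentral b z) (hξ : IsAffine b nab ξ)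
    (u : E) : ⟪b ξ u, z⟫ = 0 := by
  have hξz : b ξ z = 0 := by rw [hskew, hz, neg_zero]
  have hnab : ∀ u, 2 * ⟪nab ξ z, u⟫ = - ⟪b ξ u, z⟫ := by
    intro u
    rw [h, hξz, hz, hskew u]
    simp only [inner_zero_left, inner_neg_left]
    ring
  have hcomm : b ξ (nab ξ z) = 0 := by
    simpa [bracket_self hskew, hξz, h.nab_zero_left, h.nab_zero_right] using hξ ξ z
  have hnab_zero : nab ξ z = 0 := by
    refine (inner_self_eq_zero (𝕜 := ℝ)).mp ?_
    have := hnab (nab ξ z)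
    rw [hcomm, inner_zero_left] at this
    linarith
  have := hnab u
  rw [hnab_zero, inner_zero_left] at this
  linarith

end MetricLieAlgebra

open MetricLieAlgebra

def structConst (α β γ : ℝ) : Matrix (Fin 5) (Fin 5) ℝ :=
  !![0, 0, α, β, 0; 0, 0, γ, 0, 0; -α, -γ, 0, 0, 0; -β, 0, 0, 0, 0; 0, 0, 0, 0, 0]

theorem structConst_transpose (α β γ : ℝ) :
    (structConst α β γ).transpose = -structConst α β γ := by
  ext i j
  fin_cases i <;> fin_cases j <;> simp [structConst]

structure IsA54Bracket (α β γ : ℝ) (b : V →ₗ[ℝ] V →ₗ[ℝ] V) : Prop where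
  skew : ∀ x y, b x y = - b y x
  bracket_e0_e2 : b (e 0) (e 2) = α • e 4
  bracket_e0_e3 : b (e 0) (e 3) = β • e 4
  bracket_e1_e2 : b (e 1) (e 2) = γ • e 4
  bracket_e_e_eq_zero : ∀ i j : Fin 5, i < j →
    (i, j) ∉ ({(0, 2), (0, 3), (1, 2)} : Set (Fin 5 × Fin 5)) → b (e i) (e j) = 0

theorem eq_sum_smul_e (x : V) : x = ∑ i, x i • e i := by
  have h := (EuclideanSpace.basisFun (Fin 5) ℝ).toBasis.sum_repr x
  simp only [OrthonormalBasis.coe_toBasis, EuclideanSpace.basisFun_apply] at h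
  exact h.symm

theorem inner_e_right (x : V) (i : Fin 5) : ⟪x, e i⟫ = x i := by
  simp [e, EuclideanSpace.inner_single_right]

theorem isCentral_of_forall_bracket_e {b : V →ₗ[ℝ] V →ₗ[ℝ] V} {x : V}
    (hx : ∀ j, b x (e j) = 0) : IsCentral b x := by
  intro y
  rw [eq_sum_smul_e y]
  simp [hx]

namespace IsA54Bracket

variable {α β γ : ℝ} {b : V →ₗ[ℝ] V →ₗ[ℝ] V}

theorem bracket_e_of_lt (hb : IsA54Bracket α β γ b) {i j : Fin 5} (hij : i < j) :
    b (e i) (e j) = structConst α β γ i j • e 4 := by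
  by_cases hmem : (i, j) ∈ ({(0, 2), (0, 3), (1, 2)} : Set (Fin 5 × Fin 5))
  · rcases hmem with h | h | h <;> obtain ⟨rfl, rfl⟩ := Prod.ext_iff.mp h <;>
      simp [structConst, hb.bracket_e0_e2, hb.bracket_e0_e3, hb.bracket_e1_e2]
  · suffices structConst α β γ i j = 0 by
      rw [hb.bracket_e_e_eq_zero i j hij hmem, this, zero_smul]
    revert hij hmem
    fin_cases i <;> fin_cases j <;> simp [structConst]

theorem bracket_e (hb : IsA54Bracket α β γ b) (i j : Fin 5) :
    b (e i) (e j) = structConst α β γ i j • e 4 := by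
  have hC := congrFun₂ (structConst_transpose α β γ)
  simp only [Matrix.transpose_apply, Matrix.neg_apply] at hC
  rcases lt_trichotomy i j with hij | rfl | hij
  · exact hb.bracket_e_of_lt hij
  · rw [bracket_self hb.skew, show structConst α β γ i i = 0 by linarith [hC i i], zero_smul]
  · rw [hb.skew, hb.bracket_e_of_lt hij, hC, neg_smul, neg_neg]

theorem bracket_e_right (hb : IsA54Bracket α β γ b) (x : V) (j : Fin 5) :
    b x (e j) = (∑ i, x i * structConst α β γ i j) • e 4 := by
  conv_lhs => rw [eq_sum_smul_e x]
  simp only [map_sum, map_smul, LinearMap.sum_apply, LinearMap.smul_apply, hb.bracket_e,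
    smul_smul, Finset.sum_smul]

theorem isCentral_e_four (hb : IsA54Bracket α β γ b) : IsCentral b (e 4) :=
  isCentral_of_forall_bracket_e fun j => by
    rw [hb.bracket_e]
    fin_cases j <;> simp [structConst]

theorem isCentral_iff (hb : IsA54Bracket α β γ b) {x : V} :
    IsCentral b x ↔ ∀ j, ∑ i, x i * structConst α β γ i j = 0 := by
  have he : e 4 ≠ 0 := by simp [e]
  simp only [← smul_eq_zero_iff_left he, ← hb.bracket_e_right]
  exact ⟨fun hx j => hx (e j), isCentral_of_forall_bracket_e⟩

theorem isCentral_of_inner_bracket_e_four (hb : IsA54Bracket α β γ b) {x : V}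
    (hx : ∀ y, ⟪b x y, e 4⟫ = 0) : IsCentral b x := by
  refine hb.isCentral_iff.mpr fun j => ?_
  have h := hx (e j)
  rw [hb.bracket_e_right, real_inner_smul_left, inner_e_right] at h
  simpa [e] using h

end IsA54Bracket

theorem sum_mul_structConst_eq_zero_iff {α β γ : ℝ} (hβ : β ≠ 0) (hγ : γ ≠ 0) (x : V) :
    (∀ j, ∑ i, x i * structConst α β γ i j = 0) ↔ x 0 = 0 ∧ x 1 = 0 ∧ x 2 = 0 ∧ x 3 = 0 := by
  simp only [structConst, Matrix.of_apply, Matrix.cons_val', Matrix.cons_val_fin_one,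
    Fin.sum_univ_five, Fin.isValue, Matrix.cons_val_zero, Matrix.cons_val_one, Matrix.cons_val,
    Fin.forall_fin_succ, mul_zero, add_zero, mul_neg, zero_add, Matrix.cons_val_succ, neg_eq_zero,
    mul_eq_zero, hγ, or_false, hβ, implies_true, and_true]
  constructor
  · rintro ⟨h3, h2, h1, h0⟩
    refine ⟨h0, ?_, h2, ?_⟩
    · simpa [h0, hγ] using h1
    · simpa [h2, hβ] using h3
  · rintro ⟨h0, h1, h2, h3⟩
    simp [h0, h1, h2, h3]

/-- on `A_{5,4}` (brackets `[v1,v3]=αv5`, `[v1,v4]=βv5`, `[v2,v3]=γv5`,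
`β,γ>0`), `ξ` is affine iff `ξ1=ξ2=ξ3=ξ4=0`, i.e. `ξ ∈ Z(g) = span{v5}`. -/
theorem stmt_10
    (α β γ : ℝ) (hβ : 0 < β) (hγ : 0 < γ)
    (b : V →ₗ[ℝ] V →ₗ[ℝ] V)
    (hskew : ∀ x y, b x y = - b y x)
    (h13 : b (e 0) (e 2) = α • e 4)
    (h14 : b (e 0) (e 3) = β • e 4)
    (h23 : b (e 1) (e 2) = γ • e 4)
    (hzero : ∀ i j : Fin 5, i < j →
      (i, j) ∉ ({(0, 2), (0, 3), (1, 2)} : Set (Fin 5 × Fin 5)) → b (e i) (e j) = 0)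
    (nab : V → V → V)
    (hkoszul : ∀ x y z, 2 * ⟪nab x y, z⟫ = ⟪b x y, z⟫ - ⟪b y z, x⟫ + ⟪b z x, y⟫)
    (ξ : V) :
    (∀ v w, b ξ (nab v w) - nab (b ξ v) w - nab v (b ξ w) = 0) ↔
      (ξ 0 = 0 ∧ ξ 1 = 0 ∧ ξ 2 = 0 ∧ ξ 3 = 0) := by
  have hb : IsA54Bracket α β γ b := ⟨hskew, h13, h14, h23, hzero⟩
  have hLC : IsLeviCivita b nab := hkoszul
  change IsAffine b nab ξ ↔ _
  rw [← sum_mul_structConst_eq_zero_iff hβ.ne' hγ.ne', ← hb.isCentral_iff]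
  exact ⟨fun hξ => hb.isCentral_of_inner_bracket_e_four
      (hξ.inner_bracket_eq_zero hLC hskew hb.isCentral_e_four), IsCentral.isAffine hLC⟩
end

section
/- Let g = A_{4,1} ⊕ A_1 (type I) be the 5-dimensional metric Lie algebra with orthonormal basis v1,…,v5 and nonzero brackets [v1,v2] = α v3 + γ v5, [v1,v3] = β v5, with α, β > 0 and γ ∈ ℝ. Then ξ = Σ ξ_i v_i is affine if and only if ξ1 = ξ2 = ξ3 = 0, i.e. ξ ∈ Z(g) = span{v4, v5}. -/
local notation "⟪" x ", " y "⟫" => @inner ℝ _ _ x y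

/-!
A central `ξ` has `ad ξ = 0`, and then every term of `L_ξ ∇` vanishes. Conversely, the Koszul
formula determines the symmetric part of `∇`: `⟪∇_x y + ∇_y x, z⟫ = ⟪[z,x],y⟫ + ⟪[z,y],x⟫`.
For `v = v1, v2` it gives `∇_v v = 0`, since `[g,g] ⊆ span{v3,v5}` is orthogonal to `v`, so
`(L_ξ ∇)(v,v) = 0` reads `⟪[z,[ξ,v]],v⟫ + ⟪[z,v],[ξ,v]⟫ = 0` for all `z`. With `(v,z) = (v2,v1)`
this is `ξ1 (α² + γ²) = 0`; with `(v,z) = (v1,v3)` and `(v1,v2)` it is `γ ξ2 + β ξ3 = 0` and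
`α² ξ2 + γ (γ ξ2 + β ξ3) = 0`.
-/

theorem LinearMap.ext_basis_of_skew {ι R M P : Type*} [LinearOrder ι] [CommSemiring R]
    [AddCommMonoid M] [Module R M] [AddCommGroup P] [IsAddTorsionFree P] [Module R P]
    (bs : Module.Basis ι R M) {B B' : M →ₗ[R] M →ₗ[R] P}
    (hB : ∀ x y, B x y = -B y x) (hB' : ∀ x y, B' x y = -B' y x)
    (h : ∀ i j, i < j → B (bs i) (bs j) = B' (bs i) (bs j)) : B = B' := by
  refine LinearMap.ext_basis bs bs fun i j => ?_
  rcases lt_trichotomy i j with hij | rfl | hij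
  · exact h i j hij
  · rw [self_eq_neg.mp (hB _ _), self_eq_neg.mp (hB' _ _)]
  · rw [hB, hB', h j i hij]

section LeviCivita

variable {E : Type*} [NormedAddCommGroup E] [InnerProductSpace ℝ E]

def IsLeviCivitaProduct (b : E →ₗ[ℝ] E →ₗ[ℝ] E) (nab : E → E → E) : Prop :=
  ∀ x y z, 2 * ⟪nab x y, z⟫ = ⟪b x y, z⟫ - ⟪b y z, x⟫ + ⟪b z x, y⟫

def IsAffine (b : E →ₗ[ℝ] E →ₗ[ℝ] E) (nab : E → E → E) (ξ : E) : Prop :=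
  ∀ v w, b ξ (nab v w) - nab (b ξ v) w - nab v (b ξ w) = 0

variable {b : E →ₗ[ℝ] E →ₗ[ℝ] E} {nab : E → E → E}

theorem IsLeviCivitaProduct.nab_zero_left (hk : IsLeviCivitaProduct b nab) (y : E) :
    nab 0 y = 0 :=
  ext_inner_right ℝ fun z => by simpa using hk 0 y z

theorem IsLeviCivitaProduct.nab_zero_right (hk : IsLeviCivitaProduct b nab) (x : E) :
    nab x 0 = 0 :=
  ext_inner_right ℝ fun z => by simpa using hk x 0 z

theorem IsLeviCivitaProduct.inner_nab_add_nab_swap (hk : IsLeviCivitaProduct b nab)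
    (hskew : ∀ x y, b x y = -b y x) (x y z : E) :
    ⟪nab x y + nab y x, z⟫ = ⟪b z x, y⟫ + ⟪b z y, x⟫ := by
  have hxy := hk x y z
  have hyx := hk y x z
  rw [hskew y z] at hxy
  rw [hskew y x, hskew x z] at hyx
  simp only [inner_neg_left] at hxy hyx
  rw [inner_add_left]
  linarith

theorem IsLeviCivitaProduct.nab_self_eq_zero (hk : IsLeviCivitaProduct b nab)
    (hskew : ∀ x y, b x y = -b y x) {v : E} (hv : ∀ z, ⟪b z v, v⟫ = 0) : nab v v = 0 :=
  ext_inner_right ℝ fun z => by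
    have := hk.inner_nab_add_nab_swap hskew v v z
    rw [inner_add_left, hv] at this
    rw [inner_zero_left]
    linarith

theorem IsLeviCivitaProduct.isAffine_of_bracket_eq_zero (hk : IsLeviCivitaProduct b nab)
    {ξ : E} (hξ : b ξ = 0) : IsAffine b nab ξ := fun v w => by
  simp [hξ, hk.nab_zero_left, hk.nab_zero_right]

theorem IsAffine.inner_bracket_add_inner_bracket_eq_zero {ξ v : E} (hξ : IsAffine b nab ξ)
    (hk : IsLeviCivitaProduct b nab) (hskew : ∀ x y, b x y = -b y x) (hv : nab v v = 0)
    (z : E) : ⟪b z (b ξ v), v⟫ + ⟪b z v, b ξ v⟫ = 0 := by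
  have h := hξ v v
  rw [hv, map_zero, zero_sub, sub_eq_zero, neg_eq_iff_add_eq_zero] at h
  rw [← hk.inner_nab_add_nab_swap hskew, h, inner_zero_left]

end LeviCivita

@[simp]
theorem e_apply (i j : Fin 5) : e i j = if j = i then 1 else 0 := by
  simp [e]

@[simp]
theorem inner_e (x : V) (k : Fin 5) : ⟪x, e k⟫ = x k := by
  simp [e, EuclideanSpace.inner_single_right]

@[simp]
theorem inner_e_left (x : V) (k : Fin 5) : ⟪e k, x⟫ = x k := by
  rw [real_inner_comm, inner_e]

noncomputable def a41Bracket (α β γ : ℝ) : V →ₗ[ℝ] V →ₗ[ℝ] V :=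
  LinearMap.mk₂ ℝ
    (fun x y => ((x 0 * y 1 - x 1 * y 0) * α) • e 2 +
      ((x 0 * y 1 - x 1 * y 0) * γ + (x 0 * y 2 - x 2 * y 0) * β) • e 4)
    (fun _ _ _ => by simp only [PiLp.add_apply]; module)
    (fun _ _ _ => by simp only [PiLp.smul_apply, smul_eq_mul]; module)
    (fun _ _ _ => by simp only [PiLp.add_apply]; module)
    (fun _ _ _ => by simp only [PiLp.smul_apply, smul_eq_mul]; module)

section A41

variable {α β γ : ℝ}

@[simp]
theorem a41Bracket_apply (x y : V) :
    a41Bracket α β γ x y = ((x 0 * y 1 - x 1 * y 0) * α) • e 2 +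
      ((x 0 * y 1 - x 1 * y 0) * γ + (x 0 * y 2 - x 2 * y 0) * β) • e 4 :=
  rfl

theorem a41Bracket_skew (x y : V) : a41Bracket α β γ x y = -a41Bracket α β γ y x := by
  ext k; fin_cases k <;> simp <;> ring

theorem eq_a41Bracket {b : V →ₗ[ℝ] V →ₗ[ℝ] V} (hskew : ∀ x y, b x y = -b y x)
    (h12 : b (e 0) (e 1) = α • e 2 + γ • e 4) (h13 : b (e 0) (e 2) = β • e 4)
    (hzero : ∀ i j : Fin 5, i < j →
      (i, j) ∉ ({(0, 1), (0, 2)} : Set (Fin 5 × Fin 5)) → b (e i) (e j) = 0) :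
    b = a41Bracket α β γ := by
  have : IsAddTorsionFree V := .of_module_rat V
  refine LinearMap.ext_basis_of_skew (EuclideanSpace.basisFun (Fin 5) ℝ).toBasis hskew
    a41Bracket_skew fun i j hij => ?_
  simp only [OrthonormalBasis.coe_toBasis, EuclideanSpace.basisFun_apply]
  change b (e i) (e j) = a41Bracket α β γ (e i) (e j)
  by_cases hij' : (i, j) ∈ ({(0, 1), (0, 2)} : Set (Fin 5 × Fin 5))
  · simp only [Set.mem_insert_iff, Set.mem_singleton_iff, Prod.mk.injEq] at hij'
    obtain ⟨rfl, rfl⟩ | ⟨rfl, rfl⟩ := hij'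
    · rw [h12]; ext k; fin_cases k <;> simp
    · rw [h13]; ext k; fin_cases k <;> simp
  · rw [hzero i j hij hij']
    fin_cases i <;> fin_cases j <;> simp at hij hij' ⊢

theorem IsAffine.a41Bracket_coord_eq_zero (hα : 0 < α) (hβ : 0 < β) {nab : V → V → V}
    (hk : IsLeviCivitaProduct (a41Bracket α β γ) nab) {ξ : V}
    (hξ : IsAffine (a41Bracket α β γ) nab ξ) : ξ 0 = 0 ∧ ξ 1 = 0 ∧ ξ 2 = 0 := by
  have hnab0 : nab (e 0) (e 0) = 0 :=
    hk.nab_self_eq_zero a41Bracket_skew fun z => by simp [inner_add_left, real_inner_smul_left]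
  have hnab1 : nab (e 1) (e 1) = 0 :=
    hk.nab_self_eq_zero a41Bracket_skew fun z => by simp [inner_add_left, real_inner_smul_left]
  have h10 : ξ 0 * (α ^ 2 + γ ^ 2) = 0 := by
    have h := hξ.inner_bracket_add_inner_bracket_eq_zero hk a41Bracket_skew hnab1 (e 0)
    simp [inner_add_left, real_inner_smul_left] at h
    linear_combination h
  have h02 : ξ 1 * γ + ξ 2 * β = 0 := by
    have h := hξ.inner_bracket_add_inner_bracket_eq_zero hk a41Bracket_skew hnab0 (e 2)
    simp [real_inner_smul_left] at h
    linarith [h.resolve_left hβ.ne']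
  have h01 : ξ 1 * α ^ 2 + γ * (ξ 1 * γ + ξ 2 * β) = 0 := by
    have h := hξ.inner_bracket_add_inner_bracket_eq_zero hk a41Bracket_skew hnab0 (e 1)
    simp [inner_add_left, real_inner_smul_left] at h
    linear_combination h
  have hξ0 : ξ 0 = 0 := (mul_eq_zero.mp h10).resolve_right (by positivity)
  have hξ1 : ξ 1 = 0 := by
    have : ξ 1 * α ^ 2 = 0 := by linear_combination h01 - γ * h02
    exact (mul_eq_zero.mp this).resolve_right (by positivity)
  have hξ2 : ξ 2 = 0 := by
    have : ξ 2 * β = 0 := by linear_combination h02 - γ * hξ1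
    exact (mul_eq_zero.mp this).resolve_right hβ.ne'
  exact ⟨hξ0, hξ1, hξ2⟩

end A41

/-- on `A_{4,1} ⊕ A_1` (type I) (brackets `[v1,v2]=αv3+γv5`,
`[v1,v3]=βv5`, `α,β>0`), `ξ` is affine iff `ξ1=ξ2=ξ3=0`,
i.e. `ξ ∈ Z(g) = span{v4,v5}`. -/
theorem stmt_11
    (α β γ : ℝ) (hα : 0 < α) (hβ : 0 < β)
    (b : V →ₗ[ℝ] V →ₗ[ℝ] V)
    (hskew : ∀ x y, b x y = - b y x)
    (h12 : b (e 0) (e 1) = α • e 2 + γ • e 4)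
    (h13 : b (e 0) (e 2) = β • e 4)
    (hzero : ∀ i j : Fin 5, i < j →
      (i, j) ∉ ({(0, 1), (0, 2)} : Set (Fin 5 × Fin 5)) → b (e i) (e j) = 0)
    (nab : V → V → V)
    (hkoszul : ∀ x y z, 2 * ⟪nab x y, z⟫ = ⟪b x y, z⟫ - ⟪b y z, x⟫ + ⟪b z x, y⟫)
    (ξ : V) :
    (∀ v w, b ξ (nab v w) - nab (b ξ v) w - nab v (b ξ w) = 0) ↔
      (ξ 0 = 0 ∧ ξ 1 = 0 ∧ ξ 2 = 0) := by
  obtain rfl := eq_a41Bracket hskew h12 h13 hzero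
  change IsAffine _ nab ξ ↔ _
  refine ⟨fun hξ => hξ.a41Bracket_coord_eq_zero hα hβ hkoszul, ?_⟩
  rintro ⟨h0, h1, h2⟩
  refine IsLeviCivitaProduct.isAffine_of_bracket_eq_zero hkoszul ?_
  ext y k
  simp [h0, h1, h2]
end

section
/- Let g = A_{5,1} be the 5-dimensional metric Lie algebra with orthonormal basis v1,…,v5 and nonzero brackets [v1,v2] = α v4 + β v5, [v1,v3] = γ v5, α, γ > 0, β ∈ ℝ. If ξ ∈ g and ω ∈ g* satisfy (L_ξ∇)(v,w) = ω(v)w + ω(w)v for all v,w ∈ g (i.e. ξ is a left-invariant projective vector field with associated form ω), then ω = 0 and (L_ξ∇) = 0; hence every left-invariant projective vector field on this algebra is affine. -/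
local notation "⟪" x ", " y "⟫" => @inner ℝ _ _ x y

/-! For the Levi-Civita product of a skew bracket, `⟪∇_u w, w⟫ = 0` and `⟪∇_w u, w⟫ = ⟪[w, u], w⟫`.
If moreover `⟪[x, z], x⟫ = 0` for all `z`, then `∇_x x = 0`, and pairing the projective equation
at `(x, x)` with `x` leaves `2 ω(x) ‖x‖² = -⟪[x, [ξ, x]], x⟫ = 0`. In `A_{5,1}` every `v_i` has
this property, since no `ad v_i` has a `v_i`-component; so `ω` vanishes on a basis. -/

section Koszul

variable {E : Type*} [NormedAddCommGroup E] [InnerProductSpace ℝ E]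
  {b : E →ₗ[ℝ] E →ₗ[ℝ] E} {nab : E → E → E}

lemma bracket_self_eq_zero (hskew : ∀ x y, b x y = - b y x) (x : E) : b x x = 0 := by
  have h := hskew x x
  rw [eq_neg_iff_add_eq_zero, ← two_smul ℝ] at h
  simpa using h

variable (hskew : ∀ x y, b x y = - b y x)
  (hkoszul : ∀ x y z, 2 * ⟪nab x y, z⟫ = ⟪b x y, z⟫ - ⟪b y z, x⟫ + ⟪b z x, y⟫)
include hskew hkoszul

lemma inner_nab_self_right (u w : E) : ⟪nab u w, w⟫ = 0 := by
  have h := hkoszul u w w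
  rw [bracket_self_eq_zero hskew w, hskew w u, inner_neg_left, inner_zero_left] at h
  linarith

lemma inner_nab_self_left (u w : E) : ⟪nab w u, w⟫ = ⟪b w u, w⟫ := by
  have h := hkoszul w u w
  rw [bracket_self_eq_zero hskew w, hskew u w, inner_neg_left, inner_zero_left] at h
  linarith

lemma nab_self_eq_zero {x : E} (hx : ∀ z, ⟪b x z, x⟫ = 0) : nab x x = 0 := by
  have h := hkoszul x x (nab x x)
  rw [bracket_self_eq_zero hskew x, hskew (nab x x) x, inner_neg_left, inner_zero_left, hx] at h
  exact inner_self_eq_zero (𝕜 := ℝ) |>.mp (by linarith)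

lemma projectiveForm_eq_zero {ξ x : E} {ω : E →ₗ[ℝ] ℝ}
    (hproj : ∀ v w, b ξ (nab v w) - nab (b ξ v) w - nab v (b ξ w) = ω v • w + ω w • v)
    (hx : ∀ z, ⟪b x z, x⟫ = 0) (hx0 : x ≠ 0) : ω x = 0 := by
  have h := congrArg (⟪·, x⟫) (hproj x x)
  simp only [nab_self_eq_zero hskew hkoszul hx, map_zero, zero_sub, inner_sub_left, inner_neg_left,
    inner_add_left, real_inner_smul_left, inner_nab_self_right hskew hkoszul,
    inner_nab_self_left hskew hkoszul, hx] at h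
  have : 2 * ω x * ⟪x, x⟫ = 0 := by linarith
  simpa [hx0] using this

end Koszul

lemma inner_e_e (i j : Fin 5) : ⟪e i, e j⟫ = if i = j then 1 else 0 := by
  simp [e, EuclideanSpace.inner_single_left]

lemma basisFun_toBasis_eq_e (i : Fin 5) : (EuclideanSpace.basisFun (Fin 5) ℝ).toBasis i = e i := by
  simp [e]

lemma e_ne_zero (i : Fin 5) : e i ≠ 0 := by
  simp [e]

section A51

variable {α β γ : ℝ} {b : V →ₗ[ℝ] V →ₗ[ℝ] V}
  (h12 : b (e 0) (e 1) = α • e 3 + β • e 4)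
  (h13 : b (e 0) (e 2) = γ • e 4)
  (hzero : ∀ i j : Fin 5, i < j →
    (i, j) ∉ ({(0, 1), (0, 2)} : Set (Fin 5 × Fin 5)) → b (e i) (e j) = 0)
include h12 h13 hzero

lemma inner_bracket_e_of_lt {i j : Fin 5} (hij : i < j) :
    ⟪b (e i) (e j), e i⟫ = 0 ∧ ⟪b (e i) (e j), e j⟫ = 0 := by
  by_cases hmem : (i, j) ∈ ({(0, 1), (0, 2)} : Set (Fin 5 × Fin 5))
  · rcases hmem with hp | hp <;> obtain ⟨rfl, rfl⟩ := Prod.ext_iff.mp hp <;>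
      simp [h12, h13, inner_add_left, real_inner_smul_left, inner_e_e]
  · simp [hzero i j hij hmem]

lemma inner_bracket_e_self (hskew : ∀ x y, b x y = - b y x) (i : Fin 5) (z : V) :
    ⟪b (e i) z, e i⟫ = 0 := by
  suffices h : (innerₛₗ ℝ (e i)) ∘ₗ b (e i) = 0 by
    simpa [real_inner_comm] using LinearMap.congr_fun h z
  refine (EuclideanSpace.basisFun (Fin 5) ℝ).toBasis.ext fun k => ?_
  rw [basisFun_toBasis_eq_e, LinearMap.comp_apply, innerₛₗ_apply_apply, LinearMap.zero_apply,
    real_inner_comm]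
  rcases lt_trichotomy i k with hik | rfl | hki
  · exact (inner_bracket_e_of_lt h12 h13 hzero hik).1
  · rw [bracket_self_eq_zero hskew, inner_zero_left]
  · rw [hskew, inner_neg_left, (inner_bracket_e_of_lt h12 h13 hzero hki).2, neg_zero]

end A51

theorem stmt_16_general
    (α β γ : ℝ)
    (b : V →ₗ[ℝ] V →ₗ[ℝ] V)
    (hskew : ∀ x y, b x y = - b y x)
    (h12 : b (e 0) (e 1) = α • e 3 + β • e 4)
    (h13 : b (e 0) (e 2) = γ • e 4)
    (hzero : ∀ i j : Fin 5, i < j →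
      (i, j) ∉ ({(0, 1), (0, 2)} : Set (Fin 5 × Fin 5)) → b (e i) (e j) = 0)
    (nab : V → V → V)
    (hkoszul : ∀ x y z, 2 * ⟪nab x y, z⟫ = ⟪b x y, z⟫ - ⟪b y z, x⟫ + ⟪b z x, y⟫)
    (ξ : V) (ω : V →ₗ[ℝ] ℝ)
    (hproj : ∀ v w, b ξ (nab v w) - nab (b ξ v) w - nab v (b ξ w) = ω v • w + ω w • v) :
    ω = 0 ∧ ∀ v w, b ξ (nab v w) - nab (b ξ v) w - nab v (b ξ w) = 0 := by
  have hω : ω = 0 := (EuclideanSpace.basisFun (Fin 5) ℝ).toBasis.ext fun i => by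
    rw [basisFun_toBasis_eq_e, LinearMap.zero_apply]
    exact projectiveForm_eq_zero hskew hkoszul hproj (inner_bracket_e_self h12 h13 hzero hskew i)
      (e_ne_zero i)
  exact ⟨hω, fun v w => by simp [hproj, hω]⟩

/-- on `A_{5,1}` (brackets `[v1,v2]=αv4+βv5`, `[v1,v3]=γv5`, `α,γ>0`),
every left-invariant projective vector field has vanishing associated 1-form and is
affine. -/
theorem stmt_16
    (α β γ : ℝ) (hα : 0 < α) (hγ : 0 < γ)
    (b : V →ₗ[ℝ] V →ₗ[ℝ] V)
    (hskew : ∀ x y, b x y = - b y x)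
    (h12 : b (e 0) (e 1) = α • e 3 + β • e 4)
    (h13 : b (e 0) (e 2) = γ • e 4)
    (hzero : ∀ i j : Fin 5, i < j →
      (i, j) ∉ ({(0, 1), (0, 2)} : Set (Fin 5 × Fin 5)) → b (e i) (e j) = 0)
    (nab : V → V → V)
    (hkoszul : ∀ x y z, 2 * ⟪nab x y, z⟫ = ⟪b x y, z⟫ - ⟪b y z, x⟫ + ⟪b z x, y⟫)
    (ξ : V) (ω : V →ₗ[ℝ] ℝ)
    (hproj : ∀ v w, b ξ (nab v w) - nab (b ξ v) w - nab v (b ξ w) = ω v • w + ω w • v) :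
    ω = 0 ∧ ∀ v w, b ξ (nab v w) - nab (b ξ v) w - nab v (b ξ w) = 0 :=
  stmt_16_general α β γ b hskew h12 h13 hzero nab hkoszul ξ ω hproj
end
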